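/- arXiv:1507.02769 — 2 statements merged into one kernel-verified Lean document; each statement's English description precedes it below -/
import Mathlib

section
/- If A₁ ∈ Â₁ and A₂ ∈ Â₂ for MVE-algebras Â₁, Â₂, then the indicator 1_{A₁ ∩ A₂} is a UMVUE; consequently any finite linear combination Σ cᵢ 1_{A₁ᵢ} 1_{A₂ᵢ} with A₁ᵢ ∈ Â₁, A₂ᵢ ∈ Â₂ is a UMVUE. -/
open MeasureTheory ProbabilityTheory

/-- `χ` is a square-integrable unbiased estimator of zero for the family `P`. -/
def IsUEZero {𝓧 Θ : Type*} [MeasurableSpace 𝓧] (P : Θ → Measure 𝓧) (χ : 𝓧 → ℝ) : Prop :=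
  Measurable χ ∧ (∀ θ, MemLp χ 2 (P θ)) ∧ ∀ θ, ∫ x, χ x ∂P θ = 0

/-- `g` is a UMVUE: minimal variance at every `θ` among all unbiased estimators
(with finite second moments) of the same parametric function. -/
def IsUMVUE {𝓧 Θ : Type*} [MeasurableSpace 𝓧] (P : Θ → Measure 𝓧) (g : 𝓧 → ℝ) : Prop :=
  Measurable g ∧ (∀ θ, MemLp g 2 (P θ)) ∧
    ∀ g' : 𝓧 → ℝ, Measurable g' → (∀ θ, MemLp g' 2 (P θ)) →
      (∀ θ, ∫ x, g' x ∂P θ = ∫ x, g x ∂P θ) →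
      ∀ θ, variance g (P θ) ≤ variance g' (P θ)

/-- A sub-σ-algebra `𝓐` of the basic σ-algebra `m` is an MVE-algebra for the family `P`
if every `𝓐`-measurable statistic with finite second moments under every `P θ`
is a UMVUE of its expectation. -/
def IsMVEAlgebra {𝓧 Θ : Type*} [m : MeasurableSpace 𝓧] (P : Θ → Measure 𝓧)
    (𝓐 : MeasurableSpace 𝓧) : Prop :=
  𝓐 ≤ m ∧
    ∀ g : 𝓧 → ℝ, Measurable[𝓐] g → (∀ θ, MemLp g 2 (P θ)) → @IsUMVUE 𝓧 Θ m P g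


/-
Under each `P θ` the estimators with the same expectations as `g` are exactly `g + χ` with `χ`
an unbiased estimator of zero, and `Var (g + t χ) = Var g + 2 t E[g χ] + t² Var χ`; so `g` is a
UMVUE iff `E[g χ] = 0` for every such `χ`. If `g` is a bounded UMVUE, multiplying by `g` maps
unbiased estimators of zero to unbiased estimators of zero, hence the product of a UMVUE with
a bounded UMVUE is again a UMVUE, and UMVUEs form a linear space. Indicators of sets in an
MVE-algebra are bounded UMVUEs, and `1_{A₁ ∩ A₂} = 1_{A₁} 1_{A₂}`.
-/

open scoped ENNReal

namespace ProbabilityTheory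

variable {Ω : Type*} {mΩ : MeasurableSpace Ω} {μ : Measure Ω} [IsProbabilityMeasure μ]
  {X Y : Ω → ℝ}

lemma covariance_eq_integral_mul_of_integral_eq_zero (hX : MemLp X 2 μ) (hY : MemLp Y 2 μ)
    (hY₀ : ∫ ω, Y ω ∂μ = 0) : cov[X, Y; μ] = ∫ ω, X ω * Y ω ∂μ := by
  rw [covariance_eq_sub hX hY, hY₀, mul_zero, sub_zero]
  rfl

lemma variance_add_const_mul_of_integral_eq_zero (hX : MemLp X 2 μ) (hY : MemLp Y 2 μ)
    (hY₀ : ∫ ω, Y ω ∂μ = 0) (t : ℝ) :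
    Var[fun ω ↦ X ω + t * Y ω; μ] =
      Var[X; μ] + 2 * t * ∫ ω, X ω * Y ω ∂μ + t ^ 2 * Var[Y; μ] := by
  rw [variance_fun_add hX (hY.const_mul t), covariance_const_mul_right, variance_const_mul,
    covariance_eq_integral_mul_of_integral_eq_zero hX hY hY₀]
  ring

end ProbabilityTheory

section Estimators

variable {𝓧 Θ : Type*} [MeasurableSpace 𝓧] {P : Θ → Measure 𝓧}

lemma IsUEZero.const_mul {χ : 𝓧 → ℝ} (hχ : IsUEZero P χ) (t : ℝ) :
    IsUEZero P (fun x ↦ t * χ x) :=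
  ⟨hχ.1.const_mul t, fun θ ↦ (hχ.2.1 θ).const_mul t, fun θ ↦ by
    rw [integral_const_mul, hχ.2.2 θ, mul_zero]⟩

lemma isUEZero_sub [∀ θ, IsFiniteMeasure (P θ)] {f g : 𝓧 → ℝ} (hfm : Measurable f)
    (hf : ∀ θ, MemLp f 2 (P θ)) (hgm : Measurable g) (hg : ∀ θ, MemLp g 2 (P θ))
    (hfg : ∀ θ, ∫ x, f x ∂P θ = ∫ x, g x ∂P θ) : IsUEZero P (fun x ↦ f x - g x) :=
  ⟨hfm.sub hgm, fun θ ↦ (hf θ).sub (hg θ), fun θ ↦ by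
    change ∫ x, f x - g x ∂P θ = 0
    rw [integral_sub ((hf θ).integrable one_le_two) ((hg θ).integrable one_le_two), hfg θ,
      sub_self]⟩

variable [∀ θ, IsProbabilityMeasure (P θ)]

lemma IsUMVUE.integral_mul_eq_zero {g χ : 𝓧 → ℝ} (hg : IsUMVUE P g) (hχ : IsUEZero P χ)
    (θ : Θ) : ∫ x, g x * χ x ∂P θ = 0 := by
  obtain ⟨hgm, hg2, hmin⟩ := hg
  have hnonneg :
      ∀ t : ℝ, 0 ≤ Var[χ; P θ] * (t * t) + 2 * (∫ x, g x * χ x ∂P θ) * t + 0 := by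
    intro t
    have hle := hmin (fun x ↦ g x + t * χ x) (hgm.add (hχ.1.const_mul t))
      (fun θ' ↦ (hg2 θ').add ((hχ.2.1 θ').const_mul t))
      (fun θ' ↦ by
        rw [integral_add ((hg2 θ').integrable one_le_two)
          (((hχ.const_mul t).2.1 θ').integrable one_le_two), (hχ.const_mul t).2.2 θ', add_zero])
      θ
    rw [variance_add_const_mul_of_integral_eq_zero (hg2 θ) (hχ.2.1 θ) (hχ.2.2 θ)] at hle
    linarith
  have hdiscrim := discrim_le_zero hnonneg
  rw [discrim] at hdiscrim
  nlinarith [sq_nonneg (∫ x, g x * χ x ∂P θ)]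

lemma IsUMVUE.of_integral_mul_eq_zero {g : 𝓧 → ℝ} (hgm : Measurable g)
    (hg : ∀ θ, MemLp g 2 (P θ)) (h : ∀ χ, IsUEZero P χ → ∀ θ, ∫ x, g x * χ x ∂P θ = 0) :
    IsUMVUE P g := by
  refine ⟨hgm, hg, fun g' hg'm hg' hmean θ ↦ ?_⟩
  have hχ := isUEZero_sub hg'm hg' hgm hg hmean
  have hvar := variance_add_const_mul_of_integral_eq_zero (hg θ) (hχ.2.1 θ) (hχ.2.2 θ) 1
  simp only [add_sub_cancel, one_mul, h _ hχ θ] at hvar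
  rw [hvar]
  linarith [variance_nonneg (fun x ↦ g' x - g x) (P θ)]

lemma IsUMVUE.const_mul {g : 𝓧 → ℝ} (hg : IsUMVUE P g) (c : ℝ) :
    IsUMVUE P (fun x ↦ c * g x) :=
  .of_integral_mul_eq_zero (hg.1.const_mul c) (fun θ ↦ (hg.2.1 θ).const_mul c)
    fun χ hχ θ ↦ by
      simp_rw [mul_assoc, integral_const_mul, hg.integral_mul_eq_zero hχ θ, mul_zero]

lemma IsUMVUE.finsetSum {ι : Type*} (s : Finset ι) {g : ι → 𝓧 → ℝ}
    (hg : ∀ i ∈ s, IsUMVUE P (g i)) : IsUMVUE P (fun x ↦ ∑ i ∈ s, g i x) := by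
  refine .of_integral_mul_eq_zero (Finset.measurable_sum s fun i hi ↦ (hg i hi).1)
    (fun θ ↦ memLp_finsetSum s fun i hi ↦ (hg i hi).2.1 θ) fun χ hχ θ ↦ ?_
  simp_rw [Finset.sum_mul]
  rw [integral_finsetSum s (f := fun i x ↦ g i x * χ x)
    fun i hi ↦ ((hg i hi).2.1 θ).integrable_mul (hχ.2.1 θ)]
  exact Finset.sum_eq_zero fun i hi ↦ (hg i hi).integral_mul_eq_zero hχ θ

lemma IsUMVUE.mul_isUEZero {g χ : 𝓧 → ℝ} (hg : IsUMVUE P g) (hg_bdd : ∀ θ, MemLp g ∞ (P θ))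
    (hχ : IsUEZero P χ) : IsUEZero P (fun x ↦ g x * χ x) :=
  ⟨hg.1.mul hχ.1, fun θ ↦ (hχ.2.1 θ).mul (hg_bdd θ), hg.integral_mul_eq_zero hχ⟩

lemma IsUMVUE.mul {f g : 𝓧 → ℝ} (hf : IsUMVUE P f) (hg : IsUMVUE P g)
    (hg_bdd : ∀ θ, MemLp g ∞ (P θ)) : IsUMVUE P (fun x ↦ f x * g x) :=
  .of_integral_mul_eq_zero (hf.1.mul hg.1) (fun θ ↦ (hg_bdd θ).mul' (hf.2.1 θ))
    fun χ hχ θ ↦ by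
      simp_rw [mul_assoc]
      exact hf.integral_mul_eq_zero (hg.mul_isUEZero hg_bdd hχ) θ

end Estimators

section MVEAlgebra

-- `𝓐` is declared before the ambient σ-algebra so that instance resolution prefers the latter.
variable {𝓧 Θ : Type*} {𝓐 : MeasurableSpace 𝓧} [MeasurableSpace 𝓧] {P : Θ → Measure 𝓧}

lemma IsMVEAlgebra.isUMVUE_indicator_one [∀ θ, IsFiniteMeasure (P θ)] (h𝓐 : IsMVEAlgebra P 𝓐)
    {A : Set 𝓧} (hA : MeasurableSet[𝓐] A) : IsUMVUE P (A.indicator 1) :=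
  h𝓐.2 _ (measurable_const.indicator hA) fun _ ↦ (memLp_const 1).indicator (h𝓐.1 _ hA)

lemma IsMVEAlgebra.isUMVUE_mul_indicator_one [∀ θ, IsProbabilityMeasure (P θ)]
    (h𝓐 : IsMVEAlgebra P 𝓐) {A : Set 𝓧} (hA : MeasurableSet[𝓐] A) {f : 𝓧 → ℝ}
    (hf : IsUMVUE P f) : IsUMVUE P (fun x ↦ f x * A.indicator 1 x) :=
  hf.mul (h𝓐.isUMVUE_indicator_one hA) fun _ ↦ (memLp_top_const 1).indicator (h𝓐.1 _ hA)

end MVEAlgebra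

theorem stmt7 {𝓧 Θ : Type*} [m : MeasurableSpace 𝓧]
    (P : Θ → Measure 𝓧) [∀ θ, IsProbabilityMeasure (P θ)]
    (𝓐₁ 𝓐₂ : MeasurableSpace 𝓧)
    (h₁ : @IsMVEAlgebra 𝓧 Θ m P 𝓐₁) (h₂ : @IsMVEAlgebra 𝓧 Θ m P 𝓐₂) :
    (∀ A₁ A₂ : Set 𝓧, MeasurableSet[𝓐₁] A₁ → MeasurableSet[𝓐₂] A₂ →
      @IsUMVUE 𝓧 Θ m P ((A₁ ∩ A₂).indicator fun _ => (1 : ℝ))) ∧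
    (∀ (n : ℕ) (c : Fin n → ℝ) (A B : Fin n → Set 𝓧),
      (∀ i, MeasurableSet[𝓐₁] (A i)) → (∀ i, MeasurableSet[𝓐₂] (B i)) →
      @IsUMVUE 𝓧 Θ m P (fun x =>
        ∑ i, c i * (A i).indicator (fun _ => (1 : ℝ)) x *
          (B i).indicator (fun _ => (1 : ℝ)) x)) := by
  -- makes `m`, rather than `𝓐₂`, the instance that elaboration finds
  let _ : MeasurableSpace 𝓧 := m
  have hprod : ∀ A₁ A₂ : Set 𝓧, MeasurableSet[𝓐₁] A₁ → MeasurableSet[𝓐₂] A₂ →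
      @IsUMVUE 𝓧 Θ m P (fun x ↦ A₁.indicator 1 x * A₂.indicator 1 x) := fun A₁ A₂ hA₁ hA₂ ↦
    h₂.isUMVUE_mul_indicator_one hA₂ (h₁.isUMVUE_indicator_one hA₁)
  refine ⟨fun A₁ A₂ hA₁ hA₂ ↦ ?_, fun n c A B hA hB ↦ ?_⟩
  · rw [← Pi.one_def, Set.inter_indicator_one]
    exact hprod A₁ A₂ hA₁ hA₂
  · simp_rw [mul_assoc]
    exact IsUMVUE.finsetSum _ fun i _ ↦ (hprod (A i) (B i) (hA i) (hB i)).const_mul (c i)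
end

section
/- In Lehmann's example, a statistic ĝ(X) is a UMVUE if and only if ĝ is constant on the set {-1, 1, 2, 3, ...} (with ĝ(0) arbitrary); equivalently, the subalgebra of UMVUEs is generated by the partition {{0}, {-1,1,2,...}}. -/
/-!
Because `∑ k θᵏ = θ / (1 - θ)²`, the mass `θ` at `-1` can be absorbed into the power series:
`E_θ f(X) = (1 - θ)² ∑ₖ (f(k) + f(-1) k) θᵏ`. By the identity theorem for power series, `f` is an
unbiased estimator of zero only if `f(k) = -f(-1) k` for all `k ≥ 0`, and `x ↦ x` is one. Testing
`ĝ` against `χ(x) = x` gives `(ĝ(k) - ĝ(-1)) k = 0`; conversely every unbiased estimator of zero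
vanishes at `0`, so `ĝ χ = ĝ(-1) χ` on the support and `E_θ ĝχ = ĝ(-1) E_θ χ = 0`.
-/

open MeasureTheory

/-- The probability mass function in Lehmann's example: `X ∈ {-1,0,1,2,...}` with
`P_θ(X = -1) = θ` and `P_θ(X = k) = (1-θ)² θᵏ` for `k = 0,1,2,...`. -/
noncomputable def lehmannP (θ : ℝ) (x : ℤ) : ℝ :=
  if x = -1 then θ else if 0 ≤ x then (1 - θ) ^ 2 * θ ^ x.toNat else 0

/-- `χ` is a square-integrable unbiased estimator of zero in Lehmann's example. -/
def IsUEZeroLehmann (χ : ℤ → ℝ) : Prop :=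
  ∀ θ ∈ Set.Ioo (0 : ℝ) 1,
    Summable (fun x : ℤ => (χ x) ^ 2 * lehmannP θ x) ∧
    Summable (fun x : ℤ => χ x * lehmannP θ x) ∧
    ∑' x : ℤ, χ x * lehmannP θ x = 0

open Filter Topology FormalMultilinearSeries Set
open scoped NNReal

theorem eq_zero_of_eventually_hasSum_mul_pow_zero {a : ℕ → ℝ}
    (h : ∀ᶠ θ in 𝓝[>] 0, HasSum (fun k => a k * θ ^ k) 0) : a = 0 := by
  set p := ofScalars ℝ a
  obtain ⟨θ, hθ, hθpos⟩ := (h.and self_mem_nhdsWithin).exists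
  lift θ to ℝ≥0 using le_of_lt hθpos
  have hradius : 0 < p.radius := by
    refine lt_of_lt_of_le ?_ (p.le_radius_of_summable (r := θ) ?_)
    · exact_mod_cast hθpos
    · simpa [p, ofScalars_norm, abs_mul] using hθ.summable.abs
  have hp := p.hasFPowerSeriesOnBall hradius
  have hfreq : ∃ᶠ θ in 𝓝[≠] 0, p.sum θ = 0 := by
    refine (h.mono fun θ hθ => ?_).frequently.filter_mono (nhdsGT_le_nhdsNE 0)
    simpa [p, FormalMultilinearSeries.sum, mul_comm] using hθ.tsum_eq
  exact (ofScalars_series_eq_zero ℝ).1 <| hp.hasFPowerSeriesAt.locally_zero_iff.1 <|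
    hp.analyticAt.frequently_zero_iff_eventually_zero.1 hfreq

theorem Summable.mul_of_summable_sq_mul {ι : Type*} {u v w : ι → ℝ} (hw : ∀ i, 0 ≤ w i)
    (hu : Summable fun i => u i ^ 2 * w i) (hv : Summable fun i => v i ^ 2 * w i) :
    Summable fun i => u i * v i * w i := by
  refine (hu.add hv).of_norm_bounded fun i => ?_
  have huv : |u i| * |v i| ≤ u i ^ 2 + v i ^ 2 := by
    nlinarith [sq_nonneg (|u i| - |v i|), sq_abs (u i), sq_abs (v i)]
  simpa [abs_mul, abs_of_nonneg (hw i), add_mul] using mul_le_mul_of_nonneg_right huv (hw i)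

theorem hasSum_int_iff_hasSum_nat_of_lt_neg_one {α : Type*} [AddCommGroup α] [TopologicalSpace α]
    [IsTopologicalAddGroup α] {f : ℤ → α} (hf : ∀ x < -1, f x = 0) {s : α} :
    HasSum f s ↔ HasSum (fun n : ℕ => f n) (s - f (-1)) := by
  have hinj : Function.Injective fun n : ℕ => (n : ℤ) - 1 := fun m n h => by simpa using h
  have hrange : ∀ x ∉ range fun n : ℕ => (n : ℤ) - 1, f x = 0 := fun x hx =>
    hf x <| by_contra fun h => hx ⟨(x + 1).toNat, by simp only; omega⟩
  rw [← hinj.hasSum_iff hrange, ← hasSum_nat_add_iff' 1]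
  simp

theorem lehmannP_neg_one (θ : ℝ) : lehmannP θ (-1) = θ := by simp [lehmannP]

theorem lehmannP_natCast (θ : ℝ) (k : ℕ) : lehmannP θ k = (1 - θ) ^ 2 * θ ^ k := by
  simp [lehmannP]

theorem lehmannP_of_lt_neg_one (θ : ℝ) {x : ℤ} (hx : x < -1) : lehmannP θ x = 0 := by
  simp [lehmannP, hx.ne, show ¬0 ≤ x by omega]

theorem lehmannP_nonneg {θ : ℝ} (hθ : 0 ≤ θ) (x : ℤ) : 0 ≤ lehmannP θ x := by
  unfold lehmannP; split_ifs <;> positivity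

theorem hasSum_mul_lehmannP_iff {θ : ℝ} (hθ : θ ∈ Ioo 0 1) (f : ℤ → ℝ) (s : ℝ) :
    HasSum (fun x => f x * lehmannP θ x) s ↔
      HasSum (fun k : ℕ => (f k + f (-1) * k) * θ ^ k) (s / (1 - θ) ^ 2) := by
  have hθ' : (1 - θ) ^ 2 ≠ 0 := by nlinarith [hθ.2]
  have hgeom : HasSum (fun k : ℕ => f (-1) * k * θ ^ k) (f (-1) * θ / (1 - θ) ^ 2) := by
    simpa [mul_assoc, mul_div_assoc] using
      (hasSum_coe_mul_geometric_of_norm_lt_one (by simpa [abs_of_pos hθ.1] using hθ.2)).mul_left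
        (f (-1))
  rw [hasSum_int_iff_hasSum_nat_of_lt_neg_one fun x hx => by simp [lehmannP_of_lt_neg_one θ hx],
    ← hasSum_div_const_iff hθ']
  simp only [lehmannP_natCast, lehmannP_neg_one, mul_left_comm _ ((1 - θ) ^ 2),
    mul_div_cancel_left₀ _ hθ']
  have hs : s / (1 - θ) ^ 2 = (s - f (-1) * θ) / (1 - θ) ^ 2 + f (-1) * θ / (1 - θ) ^ 2 := by ring
  simp only [add_mul, hs]
  exact ⟨fun h => h.add hgeom, fun h => by simpa using h.sub hgeom⟩

theorem summable_mul_lehmannP_iff {θ : ℝ} (hθ : θ ∈ Ioo 0 1) (f : ℤ → ℝ) :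
    Summable (fun x => f x * lehmannP θ x) ↔
      Summable (fun k : ℕ => (f k + f (-1) * k) * θ ^ k) := by
  refine ⟨fun h => ((hasSum_mul_lehmannP_iff hθ f _).1 h.hasSum).summable, fun h => ?_⟩
  have hθ' : (1 - θ) ^ 2 ≠ 0 := by nlinarith [hθ.2]
  obtain ⟨t, ht⟩ := h
  refine ((hasSum_mul_lehmannP_iff hθ f (t * (1 - θ) ^ 2)).2 ?_).summable
  rwa [mul_div_cancel_right₀ _ hθ']

theorem coeff_eq_zero_of_hasSum_mul_lehmannP_zero {f : ℤ → ℝ}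
    (hf : ∀ θ ∈ Ioo (0 : ℝ) 1, HasSum (fun x => f x * lehmannP θ x) 0) (k : ℕ) :
    f k + f (-1) * k = 0 :=
  congrFun (eq_zero_of_eventually_hasSum_mul_pow_zero <|
    eventually_of_mem (Ioo_mem_nhdsGT one_pos) fun θ hθ => by
      simpa using (hasSum_mul_lehmannP_iff hθ f 0).1 (hf θ hθ)) k

theorem IsUEZeroLehmann.hasSum {χ : ℤ → ℝ} (hχ : IsUEZeroLehmann χ) {θ : ℝ}
    (hθ : θ ∈ Ioo 0 1) : HasSum (fun x => χ x * lehmannP θ x) 0 :=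
  (hχ θ hθ).2.2 ▸ (hχ θ hθ).2.1.hasSum

theorem IsUEZeroLehmann.apply_zero {χ : ℤ → ℝ} (hχ : IsUEZeroLehmann χ) : χ 0 = 0 := by
  simpa using coeff_eq_zero_of_hasSum_mul_lehmannP_zero (fun θ hθ => hχ.hasSum hθ) 0

theorem isUEZeroLehmann_intCast : IsUEZeroLehmann fun x => (x : ℝ) := by
  intro θ hθ
  have hθ1 : ‖θ‖ < 1 := by simpa [abs_of_pos hθ.1] using hθ.2
  have hzero : HasSum (fun x : ℤ => (x : ℝ) * lehmannP θ x) 0 :=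
    (hasSum_mul_lehmannP_iff hθ _ 0).2 (by simp)
  refine ⟨(summable_mul_lehmannP_iff hθ _).2 ?_, hzero.summable, hzero.tsum_eq⟩
  simpa [add_mul] using (summable_pow_mul_geometric_of_norm_lt_one 2 hθ1).add
    (summable_pow_mul_geometric_of_norm_lt_one 1 hθ1)

theorem stmt12 (g : ℤ → ℝ)
    (hg2 : ∀ θ ∈ Set.Ioo (0 : ℝ) 1, Summable (fun x : ℤ => (g x) ^ 2 * lehmannP θ x)) :
    (∀ χ : ℤ → ℝ, IsUEZeroLehmann χ →
        ∀ θ ∈ Set.Ioo (0 : ℝ) 1, ∑' x : ℤ, g x * χ x * lehmannP θ x = 0) ↔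
      ∀ x : ℤ, -1 ≤ x → x ≠ 0 → g x = g (-1) := by
  constructor
  · intro H x hx hx0
    have hcoeff := coeff_eq_zero_of_hasSum_mul_lehmannP_zero (f := fun x => g x * x)
      fun θ hθ => H _ isUEZeroLehmann_intCast θ hθ ▸ (Summable.mul_of_summable_sq_mul
        (lehmannP_nonneg hθ.1.le) (hg2 θ hθ) (isUEZeroLehmann_intCast θ hθ).1).hasSum
    obtain rfl | hx := hx.eq_or_lt
    · rfl
    lift x to ℕ using by omega
    have hk : (g x - g (-1)) * x = 0 := by
      have h := hcoeff x
      push_cast at h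
      linear_combination h
    exact sub_eq_zero.1 <| (mul_eq_zero.1 hk).resolve_right (by exact_mod_cast hx0)
  · intro hconst χ hχ θ hθ
    have hpointwise : ∀ x, g x * χ x * lehmannP θ x = g (-1) * (χ x * lehmannP θ x) := by
      intro x
      rcases lt_or_ge x (-1) with hx | hx
      · simp [lehmannP_of_lt_neg_one θ hx]
      rcases eq_or_ne x 0 with rfl | hx0
      · simp [hχ.apply_zero]
      · rw [hconst x hx hx0, mul_assoc]
    rw [tsum_congr hpointwise, (hχ.hasSum hθ).mul_left _ |>.tsum_eq, mul_zero]
end
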